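/- arXiv:2204.09322 — 3 statements merged into one kernel-verified Lean document; each statement's English description precedes it below -/
import Mathlib

section
/- Let p be a prime and a ∈ ℕ with a ≥ 1, and set ν_p = 1 if p = 2 and ν_p = 0 if p > 2. Let u ∈ (ℤ/p^aℤ)⁴ with p ∤ u (not all coordinates divisible by p) and Q₁(u) ≡ Q₂(u) ≡ 0 mod p^a. Then for any integer b > a, #{v ∈ (ℤ/p^bℤ)⁴ : Q₁(v) ≡ Q₂(v) ≡ 0 mod p^b and v ≡ u mod p^a} ≤ p^{2(b−a)} if p ∤ Δ, and ≤ p^{2ν_p + 3(b−a)} if p ∣ Δ. -/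
open scoped BigOperators

noncomputable section

/-- `p ∣ Δ`, where Δ is the squarefree integer whose prime divisors are exactly 2
together with the primes dividing `a i * b j - a j * b i` for some `i ≠ j`. -/
def pDvdDelta (a b : Fin 4 → ℤ) (p : ℕ) : Prop :=
  p = 2 ∨ ∃ i j : Fin 4, i ≠ j ∧ (p : ℤ) ∣ (a i * b j - a j * b i)

/-!
Some two coordinates `u i`, `u j` are units: if `u i` were the only one, reducing
`Q₁(u) = Q₂(u) = 0` would force `p ∣ a i` and `p ∣ b i`. A lift `v` of `u` modulo `p ^ β` is
determined by the upper digits `(v k).val / p ^ α` of its coordinates, so it suffices to bound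
how many lifts share the digits of all coordinates but one or two.

If `p ∤ Δ`, two lifts agreeing off `i, j` have `v_k² - w_k²` (`k = i, j`) solving a `2 × 2` system
with the unit determinant `a i * b j - a j * b i`, so `v_k² = w_k²`; as `p` is odd and the units
`v_k ≡ w_k` agree modulo `p`, `v_k + w_k` is a unit and `v_k = w_k`. In general one of `a i`, `b i` is a unit, so the
digits off `i` determine `v_i²` and hence `v_i`, up to at most four choices when `p = 2`
(the square roots of `1` modulo `2 ^ β` are `±1` and `±1 + 2 ^ (β - 1)`).
-/

open Finset

theorem eq_of_sq_eq_sq_of_isNilpotent_sub {R : Type*} [CommRing R] {x y : R}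
    (h2x : IsUnit (2 * x)) (hn : IsNilpotent (x - y)) (h : x ^ 2 = y ^ 2) : x = y := by
  have hunit : IsUnit (x + y) := by
    have := hn.neg.isUnit_add_left_of_commute h2x (Commute.all _ _)
    rwa [show 2 * x + -(x - y) = x + y by ring] at this
  have : (x - y) * (x + y) = 0 := by linear_combination h
  exact sub_eq_zero.mp (hunit.mul_left_eq_zero.mp this)

theorem Int.two_pow_dvd_sub_one_or_dvd_add_one {k : ℕ} {z : ℤ} (h : 2 ^ (k + 1) ∣ z ^ 2 - 1) :
    2 ^ k ∣ z - 1 ∨ 2 ^ k ∣ z + 1 := by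
  obtain _ | l := k
  · simp
  obtain ⟨m, rfl | rfl⟩ := z.even_or_odd'
  · have h2 : (2 : ℤ) ∣ (2 * m) ^ 2 - 1 := (dvd_pow_self 2 (Nat.succ_ne_zero _)).trans h
    rw [show (2 * m) ^ 2 - 1 = 2 * (2 * m ^ 2) - 1 by ring] at h2
    omega
  have hm : 2 ^ l ∣ m * (m + 1) := by
    rw [show (2 * m + 1) ^ 2 - 1 = 2 ^ 2 * (m * (m + 1)) by ring, pow_succ', pow_succ', ← mul_assoc,
      ← sq] at h
    exact (mul_dvd_mul_iff_left (by norm_num)).mp h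
  have hcop {n : ℤ} (hn : Odd n) : IsCoprime ((2 : ℤ) ^ l) n :=
    (Int.prime_two.coprime_iff_not_dvd.mpr
      (by rwa [← even_iff_two_dvd, Int.not_even_iff_odd])).pow_left
  rcases m.even_or_odd with hme | hmo
  · left
    rw [pow_succ', show 2 * m + 1 - 1 = 2 * m by ring]
    exact mul_dvd_mul_left 2 ((hcop hme.add_one).dvd_of_dvd_mul_right hm)
  · right
    rw [pow_succ', show 2 * m + 1 + 1 = 2 * (m + 1) by ring]
    exact mul_dvd_mul_left 2 ((hcop hmo).dvd_of_dvd_mul_left hm)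

namespace ZMod

theorem two_pow_mul_intCast_eq_zero_or_eq (k : ℕ) (t : ℤ) :
    (2 : ZMod (2 ^ (k + 1))) ^ k * t = 0 ∨ (2 : ZMod (2 ^ (k + 1))) ^ k * t = 2 ^ k := by
  have h : (2 : ZMod (2 ^ (k + 1))) ^ (k + 1) = 0 := by exact_mod_cast natCast_self (2 ^ (k + 1))
  obtain ⟨s, rfl | rfl⟩ := t.even_or_odd'
  · left; push_cast; linear_combination (s : ZMod (2 ^ (k + 1))) * h
  · right; push_cast; linear_combination (s : ZMod (2 ^ (k + 1))) * h

theorem mem_of_sq_eq_one_two_pow {k : ℕ} {z : ZMod (2 ^ (k + 1))} (hz : z ^ 2 = 1) :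
    z ∈ ({1, -1, 1 + 2 ^ k, -1 + 2 ^ k} : Finset (ZMod (2 ^ (k + 1)))) := by
  set Z : ℤ := z.cast
  have hZ : (Z : ZMod (2 ^ (k + 1))) = z := intCast_zmod_cast z
  have hdvd : 2 ^ (k + 1) ∣ Z ^ 2 - 1 := by
    have h0 : ((Z ^ 2 - 1 : ℤ) : ZMod (2 ^ (k + 1))) = 0 := by push_cast [hZ, hz]; ring
    exact_mod_cast (intCast_zmod_eq_zero_iff_dvd _ _).mp h0
  rcases Int.two_pow_dvd_sub_one_or_dvd_add_one hdvd with ⟨t, ht⟩ | ⟨t, ht⟩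
  · have hzt : z = 1 + 2 ^ k * t := by
      have := congrArg (Int.cast : ℤ → ZMod (2 ^ (k + 1))) ht
      push_cast [hZ] at this
      linear_combination this
    rcases two_pow_mul_intCast_eq_zero_or_eq k t with h | h <;> simp [hzt, h]
  · have hzt : z = -1 + 2 ^ k * t := by
      have := congrArg (Int.cast : ℤ → ZMod (2 ^ (k + 1))) ht
      push_cast [hZ] at this
      linear_combination this
    rcases two_pow_mul_intCast_eq_zero_or_eq k t with h | h <;> simp [hzt, h]

theorem ncard_sq_eq_sq_le_four {k : ℕ} {x : ZMod (2 ^ (k + 1))} (hx : IsUnit x) :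
    {y | y ^ 2 = x ^ 2}.ncard ≤ 4 := by
  classical
  obtain ⟨x, rfl⟩ := hx
  have hsub : {y | y ^ 2 = (x : ZMod (2 ^ (k + 1))) ^ 2} ⊆
      ((({1, -1, 1 + 2 ^ k, -1 + 2 ^ k} : Finset (ZMod (2 ^ (k + 1)))).image
        ((x : ZMod (2 ^ (k + 1))) * ·)) :) := by
    intro y hy
    rw [coe_image]
    refine ⟨↑x⁻¹ * y, mem_of_sq_eq_one_two_pow ?_, by simp⟩
    rw [mul_pow, hy, ← mul_pow, Units.inv_mul, one_pow]
  calc _ ≤ _ := Set.ncard_le_ncard hsub (Finset.finite_toSet _)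
    _ ≤ 4 := (Set.ncard_coe_finset _).le.trans (card_image_le.trans card_le_four)

theorem isNilpotent_sub_of_castHom_eq {p α β : ℕ} (hα : 1 ≤ α) (h : α ≤ β) {x y : ZMod (p ^ β)}
    (hxy : castHom (pow_dvd_pow p h) (ZMod (p ^ α)) x =
      castHom (pow_dvd_pow p h) (ZMod (p ^ α)) y) :
    IsNilpotent (x - y) := by
  set Z : ℤ := (x - y).cast
  have hZ : (Z : ZMod (p ^ β)) = x - y := intCast_zmod_cast _
  have hpZ : (p : ℤ) ∣ Z := by
    have h0 : (Z : ZMod (p ^ α)) = 0 := by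
      rw [← map_intCast (castHom (pow_dvd_pow p h) (ZMod (p ^ α))), hZ, map_sub, hxy, sub_self]
    exact (dvd_pow_self (p : ℤ) (show α ≠ 0 by omega)).trans
      (by exact_mod_cast (intCast_zmod_eq_zero_iff_dvd _ _).mp h0)
  obtain ⟨t, ht⟩ := hpZ
  rw [← hZ, ht, Int.cast_mul, Int.cast_natCast]
  exact (Commute.all _ _).isNilpotent_mul_right ⟨β, by exact_mod_cast natCast_self (p ^ β)⟩

variable {p : ℕ} [hp : Fact p.Prime]

theorem isUnit_of_not_prime_dvd {β : ℕ} {x : ZMod (p ^ β)} (hx : ¬ (p : ZMod (p ^ β)) ∣ x) :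
    IsUnit x := by
  rw [← natCast_zmod_val x, isUnit_iff_coprime]
  refine Nat.Coprime.pow_right _ (hp.out.coprime_iff_not_dvd.mpr fun ⟨s, hs⟩ => hx ⟨s, ?_⟩).symm
  rw [← natCast_zmod_val x, hs, Nat.cast_mul]

theorem isUnit_intCast_of_not_dvd {β : ℕ} {c : ℤ} (hc : ¬ (p : ℤ) ∣ c) :
    IsUnit (c : ZMod (p ^ β)) := by
  rw [coe_int_isUnit_iff_isCoprime, Nat.cast_pow]
  exact ((Nat.prime_iff_prime_int.mp hp.out).coprime_iff_not_dvd.mpr hc).pow_left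

theorem isUnit_two {β : ℕ} (hp2 : p ≠ 2) : IsUnit (2 : ZMod (p ^ β)) := by
  exact_mod_cast (isUnit_iff_coprime 2 (p ^ β)).mpr
    (Nat.Coprime.pow_right _ ((Nat.coprime_primes Nat.prime_two hp.out).mpr hp2.symm))

theorem eq_of_sq_eq_sq_of_castHom_eq (hp2 : p ≠ 2) {α β : ℕ} (hα : 1 ≤ α) (h : α ≤ β)
    {x y : ZMod (p ^ β)} (hx : IsUnit x)
    (hxy : castHom (pow_dvd_pow p h) (ZMod (p ^ α)) x = castHom (pow_dvd_pow p h) (ZMod (p ^ α)) y)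
    (hsq : x ^ 2 = y ^ 2) : x = y :=
  eq_of_sq_eq_sq_of_isNilpotent_sub ((isUnit_two hp2).mul hx)
    (isNilpotent_sub_of_castHom_eq hα h hxy) hsq

theorem ncard_sq_eq_sq_castHom_eq_le {α β : ℕ} (hα : 1 ≤ α) (h : α ≤ β) {x : ZMod (p ^ β)}
    (hx : IsUnit x) :
    {y | y ^ 2 = x ^ 2 ∧ castHom (pow_dvd_pow p h) (ZMod (p ^ α)) y =
      castHom (pow_dvd_pow p h) (ZMod (p ^ α)) x}.ncard ≤ if p = 2 then 4 else 1 := by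
  split_ifs with hp2
  · subst hp2
    obtain ⟨k, rfl⟩ := Nat.exists_eq_add_one.mpr (show 0 < β by omega)
    exact (Set.ncard_le_ncard (fun y hy => hy.1) (Set.toFinite _)).trans (ncard_sq_eq_sq_le_four hx)
  · refine (Set.ncard_le_one (Set.toFinite _)).mpr fun y hy z hz => ?_
    rw [← eq_of_sq_eq_sq_of_castHom_eq hp2 hα h hx hy.2.symm hy.1.symm,
      ← eq_of_sq_eq_sq_of_castHom_eq hp2 hα h hx hz.2.symm hz.1.symm]

theorem prime_dvd_of_sum_mul_sq_eq_zero {ι : Type*} [Fintype ι] {α : ℕ} (hα : 1 ≤ α) {c : ι → ℤ}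
    {x : ι → ZMod (p ^ α)} (h : ∑ k, (c k : ZMod (p ^ α)) * x k ^ 2 = 0) {i : ι}
    (hc : ¬ (p : ℤ) ∣ c i) (hx : ∀ k, k ≠ i → (p : ZMod (p ^ α)) ∣ x k) :
    (p : ZMod (p ^ α)) ∣ x i := by
  classical
  by_contra hxi
  have hunit : IsUnit ((c i : ZMod (p ^ α)) * x i ^ 2) :=
    (isUnit_intCast_of_not_dvd hc).mul ((isUnit_of_not_prime_dvd hxi).pow 2)
  have hdvd : (p : ZMod (p ^ α)) ∣ (c i : ZMod (p ^ α)) * x i ^ 2 := by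
    rw [Fintype.sum_eq_add_sum_compl i, add_eq_zero_iff_eq_neg] at h
    rw [h, dvd_neg]
    exact dvd_sum fun k hk => ((hx k (by simpa using hk)).pow two_ne_zero).mul_left _
  exact prime_natCast_not_isUnit_pow hp.out hα (isUnit_of_dvd_unit hdvd hunit)

end ZMod

theorem Set.ncard_le_mul_card_of_ncard_fiber_le {α β : Type*} [Finite α] [Fintype β] {s : Set α}
    (f : α → β) {r : ℕ} (h : ∀ z, {x ∈ s | f x = z}.ncard ≤ r) : s.ncard ≤ r * Fintype.card β := by
  classical
  have := Fintype.ofFinite α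
  rw [Set.ncard_eq_toFinset_card']
  refine card_le_mul_card_image_of_maps_to (f := f) (t := Finset.univ)
    (fun _ _ => Finset.mem_univ _) r fun z _ => ?_
  convert h z
  rw [Set.ncard_eq_toFinset_card']
  congr 1
  ext x
  simp

namespace ZMod

def valDiv {n d : ℕ} [NeZero n] (hd : d ∣ n) (x : ZMod n) : Fin (n / d) :=
  ⟨x.val / d, Nat.div_lt_div_of_lt_of_dvd hd x.val_lt⟩

theorem eq_of_castHom_eq_of_valDiv_eq {n d : ℕ} [NeZero n] (hd : d ∣ n) {x y : ZMod n}
    (hc : castHom hd (ZMod d) x = castHom hd (ZMod d) y) (hv : valDiv hd x = valDiv hd y) :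
    x = y := by
  have hmod : x.val % d = y.val % d := by
    simpa only [castHom_apply, cast_eq_val, val_natCast] using congrArg val hc
  have hdiv : x.val / d = y.val / d := congrArg Fin.val hv
  exact val_injective n (by rw [← Nat.div_add_mod x.val d, hdiv, hmod, Nat.div_add_mod])

end ZMod

section QuadraticForms

variable {R ι : Type*} [CommRing R] [Fintype ι]

theorem sq_eq_sq_of_sum_mul_sq_eq {c v w : ι → R} {i : ι} (hc : IsUnit (c i))
    (h : ∑ k, c k * v k ^ 2 = ∑ k, c k * w k ^ 2) (hvw : ∀ k, k ≠ i → v k = w k) :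
    v i ^ 2 = w i ^ 2 := by
  have hsum : ∑ k, c k * (v k ^ 2 - w k ^ 2) = 0 := by
    simp only [mul_sub, sum_sub_distrib, h, sub_self]
  rw [Fintype.sum_eq_single i fun k hk => by rw [hvw k hk, sub_self, mul_zero]] at hsum
  exact sub_eq_zero.mp (hc.mul_right_eq_zero.mp hsum)

theorem sq_eq_sq_of_sum_mul_sq_eq_of_isUnit_det {a b v w : ι → R} {i j : ι} (hij : i ≠ j)
    (hdet : IsUnit (a i * b j - a j * b i))
    (ha : ∑ k, a k * v k ^ 2 = ∑ k, a k * w k ^ 2) (hb : ∑ k, b k * v k ^ 2 = ∑ k, b k * w k ^ 2)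
    (hvw : ∀ k, k ≠ i → k ≠ j → v k = w k) :
    v i ^ 2 = w i ^ 2 := by
  have hpair (c : ι → R) (hc : ∑ k, c k * v k ^ 2 = ∑ k, c k * w k ^ 2) :
      c i * (v i ^ 2 - w i ^ 2) + c j * (v j ^ 2 - w j ^ 2) = 0 := by
    rw [← Fintype.sum_eq_add (f := fun k => c k * (v k ^ 2 - w k ^ 2)) i j hij fun k hk => by
      rw [hvw k hk.1 hk.2, sub_self, mul_zero]]
    simp only [mul_sub, sum_sub_distrib, hc, sub_self]
  -- Cramer's rule for the 2 × 2 system satisfied by the differences of squares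
  have hcramer : (a i * b j - a j * b i) * (v i ^ 2 - w i ^ 2) = 0 := by
    linear_combination b j * hpair a ha - a j * hpair b hb
  exact sub_eq_zero.mp (hdet.mul_right_eq_zero.mp hcramer)

end QuadraticForms

theorem Int.not_dvd_or_not_dvd_of_isCoprime {p : ℕ} (hp : p.Prime) {a b : ℤ} (h : IsCoprime a b) :
    ¬ (p : ℤ) ∣ a ∨ ¬ (p : ℤ) ∣ b := by
  rw [← not_and_or]
  exact fun ⟨hpa, hpb⟩ => (Nat.prime_iff_prime_int.mp hp).not_isUnit (h.isUnit_of_dvd' hpa hpb)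

section Solutions

variable {ι : Type*} [Fintype ι]

def liftSolutions (a b : ι → ℤ) (p : ℕ) {α β : ℕ} (h : α ≤ β) (u : ι → ZMod (p ^ α)) :
    Set (ι → ZMod (p ^ β)) :=
  {v | (∑ i, (a i : ZMod (p ^ β)) * v i ^ 2 = 0) ∧ (∑ i, (b i : ZMod (p ^ β)) * v i ^ 2 = 0) ∧
    (fun i => ZMod.castHom (pow_dvd_pow p h) (ZMod (p ^ α)) (v i)) = u}

variable {a b : ι → ℤ} {p α β : ℕ} {h : α ≤ β} {u : ι → ZMod (p ^ α)} {v w : ι → ZMod (p ^ β)}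

theorem castHom_apply_of_mem_liftSolutions (hv : v ∈ liftSolutions a b p h u) (k : ι) :
    ZMod.castHom (pow_dvd_pow p h) (ZMod (p ^ α)) (v k) = u k :=
  congrFun hv.2.2 k

variable [hp : Fact p.Prime]

theorem isUnit_of_mem_liftSolutions (hv : v ∈ liftSolutions a b p h u) {k : ι}
    (hu : ¬ (p : ZMod (p ^ α)) ∣ u k) : IsUnit (v k) := by
  refine ZMod.isUnit_of_not_prime_dvd fun hpv => hu ?_
  have := map_dvd (ZMod.castHom (pow_dvd_pow p h) (ZMod (p ^ α))) hpv
  rwa [map_natCast, castHom_apply_of_mem_liftSolutions hv] at this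

theorem exists_ne_not_prime_dvd_of_sum_mul_sq_eq_zero (hα : 1 ≤ α)
    (hcop : ∀ i, IsCoprime (a i) (b i)) (hu : ¬ ∀ i, (p : ZMod (p ^ α)) ∣ u i)
    (ha : ∑ i, (a i : ZMod (p ^ α)) * u i ^ 2 = 0) (hb : ∑ i, (b i : ZMod (p ^ α)) * u i ^ 2 = 0) :
    ∃ i j, i ≠ j ∧ ¬ (p : ZMod (p ^ α)) ∣ u i ∧ ¬ (p : ZMod (p ^ α)) ∣ u j := by
  push Not at hu
  obtain ⟨i, hi⟩ := hu
  by_contra! hall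
  have hoff : ∀ k, k ≠ i → (p : ZMod (p ^ α)) ∣ u k := fun k hk => hall i k hk.symm hi
  rcases Int.not_dvd_or_not_dvd_of_isCoprime hp.out (hcop i) with hc | hc
  exacts [hi (ZMod.prime_dvd_of_sum_mul_sq_eq_zero hα ha hc hoff),
    hi (ZMod.prime_dvd_of_sum_mul_sq_eq_zero hα hb hc hoff)]

theorem ncard_le_mul_of_ncard_eqOn_le {S : Set (ι → ZMod (p ^ β))}
    (hS : ∀ v ∈ S, ∀ k, ZMod.castHom (pow_dvd_pow p h) (ZMod (p ^ α)) (v k) = u k)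
    (K : Finset ι) {r : ℕ} (hr : ∀ v₀ ∈ S, {v ∈ S | ∀ k ∈ K, v k = v₀ k}.ncard ≤ r) :
    S.ncard ≤ r * p ^ (#K * (β - α)) := by
  classical
  let digits (v : ι → ZMod (p ^ β)) (k : K) := ZMod.valDiv (pow_dvd_pow p h) (v k)
  calc S.ncard ≤ r * Fintype.card (K → Fin (p ^ β / p ^ α)) := by
        refine Set.ncard_le_mul_card_of_ncard_fiber_le digits fun z => ?_
        rcases Set.eq_empty_or_nonempty {v ∈ S | digits v = z} with hF | ⟨v₀, hv₀, hz₀⟩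
        · simp [hF]
        refine (Set.ncard_le_ncard ?_ (Set.toFinite _)).trans (hr v₀ hv₀)
        rintro v ⟨hv, hz⟩
        exact ⟨hv, fun k hk => ZMod.eq_of_castHom_eq_of_valDiv_eq _
          ((hS v hv k).trans (hS v₀ hv₀ k).symm) (congrFun (hz.trans hz₀.symm) ⟨k, hk⟩)⟩
    _ = r * p ^ (#K * (β - α)) := by
        rw [Fintype.card_fun, Fintype.card_fin, Fintype.card_coe, Nat.pow_div h hp.out.pos,
          ← pow_mul, mul_comm (β - α)]

theorem eq_of_mem_liftSolutions_of_eq_off_pair (hp2 : p ≠ 2) (hα : 1 ≤ α) {i j : ι} (hij : i ≠ j)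
    (hui : ¬ (p : ZMod (p ^ α)) ∣ u i) (huj : ¬ (p : ZMod (p ^ α)) ∣ u j)
    (hdet : ¬ (p : ℤ) ∣ a i * b j - a j * b i)
    (hv : v ∈ liftSolutions a b p h u) (hw : w ∈ liftSolutions a b p h u)
    (hvw : ∀ k, k ≠ i → k ≠ j → v k = w k) : v = w := by
  have hdet' : IsUnit ((a i : ZMod (p ^ β)) * b j - a j * b i) := by
    exact_mod_cast ZMod.isUnit_intCast_of_not_dvd hdet
  have ha := hv.1.trans hw.1.symm
  have hb := hv.2.1.trans hw.2.1.symm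
  have hcast (k : ι) := (castHom_apply_of_mem_liftSolutions hv k).trans
    (castHom_apply_of_mem_liftSolutions hw k).symm
  have hi : v i = w i := ZMod.eq_of_sq_eq_sq_of_castHom_eq hp2 hα h
    (isUnit_of_mem_liftSolutions hv hui) (hcast i)
    (sq_eq_sq_of_sum_mul_sq_eq_of_isUnit_det hij hdet' ha hb hvw)
  have hj : v j = w j := ZMod.eq_of_sq_eq_sq_of_castHom_eq hp2 hα h
    (isUnit_of_mem_liftSolutions hv huj) (hcast j)
    (sq_eq_sq_of_sum_mul_sq_eq_of_isUnit_det hij.symm (by simpa only [neg_sub] using hdet'.neg)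
      ha hb fun k hkj hki => hvw k hki hkj)
  funext k
  by_cases hki : k = i
  · exact hki ▸ hi
  by_cases hkj : k = j
  · exact hkj ▸ hj
  exact hvw k hki hkj

theorem ncard_liftSolutions_le_of_not_dvd_det (hp2 : p ≠ 2) (hα : 1 ≤ α) {i j : ι} (hij : i ≠ j)
    (hui : ¬ (p : ZMod (p ^ α)) ∣ u i) (huj : ¬ (p : ZMod (p ^ α)) ∣ u j)
    (hdet : ¬ (p : ℤ) ∣ a i * b j - a j * b i) :
    (liftSolutions a b p h u).ncard ≤ p ^ ((Fintype.card ι - 2) * (β - α)) := by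
  classical
  have hfib (v₀) (_ : v₀ ∈ liftSolutions a b p h u) :
      {v ∈ liftSolutions a b p h u | ∀ k ∈ ({i, j}ᶜ : Finset ι), v k = v₀ k}.ncard ≤ 1 :=
    (Set.ncard_le_one (Set.toFinite _)).mpr fun v ⟨hv, hv₀⟩ w ⟨hw, hw₀⟩ =>
      eq_of_mem_liftSolutions_of_eq_off_pair hp2 hα hij hui huj hdet hv hw fun k hki hkj =>
        (hv₀ k (by simp [hki, hkj])).trans (hw₀ k (by simp [hki, hkj])).symm
  have := ncard_le_mul_of_ncard_eqOn_le (h := h) (fun _ hv => castHom_apply_of_mem_liftSolutions hv)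
    _ hfib
  rwa [one_mul, card_compl, card_pair hij] at this

theorem ncard_liftSolutions_le (hα : 1 ≤ α) (hcop : ∀ i, IsCoprime (a i) (b i)) {i : ι}
    (hui : ¬ (p : ZMod (p ^ α)) ∣ u i) :
    (liftSolutions a b p h u).ncard ≤
      (if p = 2 then 4 else 1) * p ^ ((Fintype.card ι - 1) * (β - α)) := by
  classical
  obtain ⟨c, hc, hcS⟩ : ∃ c : ι → ℤ, ¬ (p : ℤ) ∣ c i ∧
      ∀ v ∈ liftSolutions a b p h u, ∑ k, (c k : ZMod (p ^ β)) * v k ^ 2 = 0 :=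
    (Int.not_dvd_or_not_dvd_of_isCoprime hp.out (hcop i)).elim
      (fun ha => ⟨a, ha, fun _ hv => hv.1⟩) (fun hb => ⟨b, hb, fun _ hv => hv.2.1⟩)
  have hfib (v₀) (hv₀ : v₀ ∈ liftSolutions a b p h u) :
      {v ∈ liftSolutions a b p h u | ∀ k ∈ ({i}ᶜ : Finset ι), v k = v₀ k}.ncard ≤
        if p = 2 then 4 else 1 := by
    have hsub : {v ∈ liftSolutions a b p h u | ∀ k ∈ ({i}ᶜ : Finset ι), v k = v₀ k} ⊆
        Function.update v₀ i '' {y | y ^ 2 = v₀ i ^ 2 ∧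
          ZMod.castHom (pow_dvd_pow p h) (ZMod (p ^ α)) y =
            ZMod.castHom (pow_dvd_pow p h) (ZMod (p ^ α)) (v₀ i)} := by
      rintro v ⟨hv, hvv₀⟩
      have hoff : ∀ k, k ≠ i → v k = v₀ k := fun k hk => hvv₀ k (by simpa using hk)
      refine ⟨v i, ⟨sq_eq_sq_of_sum_mul_sq_eq (ZMod.isUnit_intCast_of_not_dvd hc)
        ((hcS v hv).trans (hcS v₀ hv₀).symm) hoff, ?_⟩,
        (Function.eq_update_iff.mpr ⟨rfl, hoff⟩).symm⟩
      rw [castHom_apply_of_mem_liftSolutions hv, castHom_apply_of_mem_liftSolutions hv₀]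
    exact (Set.ncard_le_ncard hsub (Set.toFinite _)).trans
      ((Set.ncard_image_le (Set.toFinite _)).trans
        (ZMod.ncard_sq_eq_sq_castHom_eq_le hα h (isUnit_of_mem_liftSolutions hv₀ hui)))
  have := ncard_le_mul_of_ncard_eqOn_le (h := h) (fun _ hv => castHom_apply_of_mem_liftSolutions hv)
    _ hfib
  rwa [card_compl, card_singleton] at this

end Solutions

theorem stmt12_general
    (a b : Fin 4 → ℤ)
    (hcop : ∀ i, IsCoprime (a i) (b i))
    (p : ℕ) (hp : p.Prime) (α β : ℕ) (hα : 1 ≤ α) (hαβ : α < β)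
    (u : Fin 4 → ZMod (p ^ α))
    (hu : ¬ ∀ i, (p : ZMod (p ^ α)) ∣ u i)
    (hQ1 : ∑ i, (a i : ZMod (p ^ α)) * u i ^ 2 = 0)
    (hQ2 : ∑ i, (b i : ZMod (p ^ α)) * u i ^ 2 = 0) :
    (¬ pDvdDelta a b p →
      Set.ncard {v : Fin 4 → ZMod (p ^ β) |
        (∑ i, (a i : ZMod (p ^ β)) * v i ^ 2 = 0) ∧
        (∑ i, (b i : ZMod (p ^ β)) * v i ^ 2 = 0) ∧
        (fun i => ZMod.castHom (pow_dvd_pow p hαβ.le) (ZMod (p ^ α)) (v i)) = u} ≤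
        p ^ (2 * (β - α))) ∧
    (pDvdDelta a b p →
      Set.ncard {v : Fin 4 → ZMod (p ^ β) |
        (∑ i, (a i : ZMod (p ^ β)) * v i ^ 2 = 0) ∧
        (∑ i, (b i : ZMod (p ^ β)) * v i ^ 2 = 0) ∧
        (fun i => ZMod.castHom (pow_dvd_pow p hαβ.le) (ZMod (p ^ α)) (v i)) = u} ≤
        p ^ (2 * (if p = 2 then 1 else 0) + 3 * (β - α))) := by
  have := Fact.mk hp
  obtain ⟨i, j, hij, hui, huj⟩ := exists_ne_not_prime_dvd_of_sum_mul_sq_eq_zero hα hcop hu hQ1 hQ2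
  refine ⟨fun hΔ => ?_, fun _ => ?_⟩
  · refine (ncard_liftSolutions_le_of_not_dvd_det (h := hαβ.le) (fun h2 => hΔ (Or.inl h2)) hα hij
      hui huj fun hdet => hΔ (Or.inr ⟨i, j, hij, hdet⟩)).trans_eq ?_
    simp
  · refine (ncard_liftSolutions_le (h := hαβ.le) hα hcop hui).trans (le_of_eq ?_)
    split_ifs with hp2
    · subst hp2
      rw [pow_add]
      norm_num
    · simp

/-- Lemma 3.3 (lem:loc) of the paper. -/
theorem stmt12
    (a b : Fin 4 → ℤ)
    (hcop : ∀ i, IsCoprime (a i) (b i))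
    (hprop : ∀ i j, i ≠ j → a i * b j - a j * b i ≠ 0)
    (p : ℕ) (hp : p.Prime) (α β : ℕ) (hα : 1 ≤ α) (hαβ : α < β)
    (u : Fin 4 → ZMod (p ^ α))
    (hu : ¬ ∀ i, (p : ZMod (p ^ α)) ∣ u i)
    (hQ1 : ∑ i, (a i : ZMod (p ^ α)) * u i ^ 2 = 0)
    (hQ2 : ∑ i, (b i : ZMod (p ^ α)) * u i ^ 2 = 0) :
    (¬ pDvdDelta a b p →
      Set.ncard {v : Fin 4 → ZMod (p ^ β) |
        (∑ i, (a i : ZMod (p ^ β)) * v i ^ 2 = 0) ∧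
        (∑ i, (b i : ZMod (p ^ β)) * v i ^ 2 = 0) ∧
        (fun i => ZMod.castHom (pow_dvd_pow p hαβ.le) (ZMod (p ^ α)) (v i)) = u} ≤
        p ^ (2 * (β - α))) ∧
    (pDvdDelta a b p →
      Set.ncard {v : Fin 4 → ZMod (p ^ β) |
        (∑ i, (a i : ZMod (p ^ β)) * v i ^ 2 = 0) ∧
        (∑ i, (b i : ZMod (p ^ β)) * v i ^ 2 = 0) ∧
        (fun i => ZMod.castHom (pow_dvd_pow p hαβ.le) (ZMod (p ^ α)) (v i)) = u} ≤
        p ^ (2 * (if p = 2 then 1 else 0) + 3 * (β - α))) :=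
  stmt12_general a b hcop p hp α β hα hαβ u hu hQ1 hQ2
end
end

section
/- There is a constant C, depending only on L₁,…,L₄, such that for every δ ≥ 0, every i₁ ∈ {1,2,3,4} and all S, R ≥ 1, #{x ∈ ℤ²_prim : S ≤ |x| < 2S, R ≤ |L_{i₁}(x)| < 2R, L₁(x)L₂(x)L₃(x)L₄(x) ≠ 0, Δ_bad(x) > (S·R)^δ} ≤ C·(S·R)^{1 − δ/8}. -/
open scoped BigOperators

noncomputable section

/-- Sup norm of an integer vector. -/
def supNorm {n : ℕ} (x : Fin n → ℤ) : ℕ := Finset.univ.sup fun i => (x i).natAbs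

/-- The binary linear form `L i (x) = a i * x₁ + b i * x₂`. -/
def Lf (a b : Fin 4 → ℤ) (i : Fin 4) (x : Fin 2 → ℤ) : ℤ := a i * x 0 + b i * x 1

/-- Primitive integer vectors: the gcd of the coordinates is 1. -/
def IsPrim {n : ℕ} (x : Fin n → ℤ) : Prop := Finset.univ.gcd x = 1

/-- The square-full part of a nonzero integer: `∏_{p^e ∥ m, e ≥ 2} p^e`. -/
def badPart (m : ℤ) : ℕ :=
  ∏ p ∈ m.natAbs.primeFactors,
    if 2 ≤ m.natAbs.factorization p then p ^ m.natAbs.factorization p else 1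

/-!
For primitive `x`, a prime dividing two of the values `L_i(x)` divides the determinant
`a_i b_j - a_j b_i`, so outside the primes of `K = ∏_{i ≠ j} (a_i b_j - a_j b_i)` the square-full
part of `∏ L_i(x)` is the product of those of the single `L_i(x)`. Hence `Δ_bad(x) > (SR)^δ`
forces some `L_i(x)` to have square-full part `s²t³ ≥ c²`, with `c = (SR)^{δ/8} / K`.
Since `x ↦ (L_i(x), L_j(x))` is injective for `i ≠ j`, the `x` in the box `|x| < 2S`,
`|L_{i₁}(x)| < 2R` with `s²t³ ∣ L_i(x)` number `O(SR / (s²t³))`, and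
`∑_{s²t³ ≥ c²} 1 / (s²t³) = O(1 / c)`.
-/

open Finset

lemma badPart_eq_prod_pow (m : ℤ) :
    badPart m = ∏ p ∈ m.natAbs.primeFactors,
      p ^ (if 2 ≤ m.natAbs.factorization p then m.natAbs.factorization p else 0) :=
  prod_congr rfl fun p _ => by split_ifs <;> simp

lemma badPart_ne_zero (m : ℤ) : badPart m ≠ 0 := by
  rw [badPart_eq_prod_pow]
  exact prod_ne_zero_iff.mpr fun p hp => pow_ne_zero _ (Nat.prime_of_mem_primeFactors hp).ne_zero

lemma factorization_badPart (m : ℤ) (p : ℕ) :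
    (badPart m).factorization p =
      if 2 ≤ m.natAbs.factorization p then m.natAbs.factorization p else 0 := by
  have hne : ∀ q ∈ m.natAbs.primeFactors,
      (if 2 ≤ m.natAbs.factorization q then q ^ m.natAbs.factorization q else 1) ≠ 0 :=
    fun q hq => by split_ifs <;> simp [(Nat.prime_of_mem_primeFactors hq).ne_zero]
  rw [badPart, Nat.factorization_prod hne, Finsupp.finsetSum_apply]
  by_cases hp : p ∈ m.natAbs.primeFactors
  · rw [sum_eq_single_of_mem p hp]
    · split_ifs <;> simp [(Nat.prime_of_mem_primeFactors hp).factorization_pow]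
    · intro q hq hqp
      split_ifs <;> simp [(Nat.prime_of_mem_primeFactors hq).factorization_pow, hqp]
  · rw [← Nat.support_factorization, Finsupp.notMem_support_iff] at hp
    rw [hp, sum_eq_zero]
    · simp
    · intro q hq
      split_ifs with hq2
      · rw [(Nat.prime_of_mem_primeFactors hq).factorization_pow, Finsupp.single_apply]
        split_ifs with hqp <;> [(subst hqp; omega); rfl]
      · simp

lemma badPart_dvd_natAbs (m : ℤ) (hm : m ≠ 0) : badPart m ∣ m.natAbs := by
  rw [← Nat.factorization_le_iff_dvd (badPart_ne_zero m) (Int.natAbs_ne_zero.mpr hm)]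
  intro p
  rw [factorization_badPart]
  split_ifs <;> simp

lemma exists_sq_mul_cube_eq_prod_pow {ι M : Type*} [CommMonoid M] (s : Finset ι) (f : ι → M)
    (e : ι → ℕ) (he : ∀ i ∈ s, e i ≠ 1) :
    ∃ u v : M, ∏ i ∈ s, f i ^ e i = u ^ 2 * v ^ 3 := by
  -- an exponent `e ≠ 1` is `2k` or `2k + 3`
  refine ⟨∏ i ∈ s, f i ^ ((e i - 3 * (e i % 2)) / 2), ∏ i ∈ s, f i ^ (e i % 2), ?_⟩
  rw [← prod_pow, ← prod_pow, ← prod_mul_distrib]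
  refine prod_congr rfl fun i hi => ?_
  rw [← pow_mul, ← pow_mul, ← pow_add]
  have := he i hi
  congr 1
  omega

lemma ite_two_le_sum_le {ι : Type*} (s : Finset ι) (v : ι → ℕ) :
    (if 2 ≤ ∑ i ∈ s, v i then ∑ i ∈ s, v i else 0) ≤
      #s + ∑ i ∈ s, if 2 ≤ v i then v i else 0 := by
  rw [card_eq_sum_ones, ← sum_add_distrib]
  split_ifs
  · exact sum_le_sum fun i _ => by split_ifs <;> omega
  · exact Nat.zero_le _

lemma ite_two_le_sum_le_of_pairwise {ι : Type*} (s : Finset ι) (v : ι → ℕ)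
    (hv : ∀ i ∈ s, ∀ j ∈ s, i ≠ j → v i = 0 ∨ v j = 0) :
    (if 2 ≤ ∑ i ∈ s, v i then ∑ i ∈ s, v i else 0) ≤ ∑ i ∈ s, if 2 ≤ v i then v i else 0 := by
  by_cases h : ∃ i ∈ s, v i ≠ 0
  · obtain ⟨i, hi, hvi⟩ := h
    rw [sum_eq_single_of_mem i hi fun j hj hji => (hv i hi j hj hji.symm).resolve_left hvi]
    exact single_le_sum (f := fun i => if 2 ≤ v i then v i else 0) (fun _ _ => Nat.zero_le _) hi
  · push Not at h
    simp [sum_eq_zero h]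

theorem badPart_prod_dvd {ι : Type*} (s : Finset ι) (f : ι → ℤ) (hf : ∀ i ∈ s, f i ≠ 0)
    {D : ℤ} (hD : D ≠ 0) (hdvd : ∀ i ∈ s, ∀ j ∈ s, i ≠ j → ∀ n : ℤ, n ∣ f i → n ∣ f j → n ∣ D) :
    badPart (∏ i ∈ s, f i) ∣ D.natAbs ^ #s * ∏ i ∈ s, badPart (f i) := by
  have hD' : D.natAbs ≠ 0 := Int.natAbs_ne_zero.mpr hD
  rw [← Nat.factorization_le_iff_dvd (badPart_ne_zero _)
    (mul_ne_zero (pow_ne_zero _ hD') (prod_ne_zero_iff.mpr fun i _ => badPart_ne_zero _))]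
  intro p
  have habs : (∏ i ∈ s, f i).natAbs = ∏ i ∈ s, (f i).natAbs := map_prod Int.natAbsHom f s
  simp only [factorization_badPart, habs, Nat.factorization_mul (pow_ne_zero _ hD')
    (prod_ne_zero_iff.mpr fun i _ => badPart_ne_zero _), Nat.factorization_pow,
    Nat.factorization_prod fun i hi => Int.natAbs_ne_zero.mpr (hf i hi),
    Nat.factorization_prod fun i _ => badPart_ne_zero (f i), Finsupp.add_apply,
    Finsupp.smul_apply, smul_eq_mul, Finsupp.finsetSum_apply]
  -- If `p ∤ D`, at most one `f i` is divisible by `p`; otherwise each `f i` with `p ∥ f i`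
  -- is paid for by one factor `p` of `D`.
  by_cases hp : D.natAbs.factorization p = 0
  · rw [hp, mul_zero, zero_add]
    refine ite_two_le_sum_le_of_pairwise s _ fun i hi j hj hij => ?_
    by_contra! h
    have hpp : p.Prime := Nat.prime_of_mem_primeFactors <| by
      rw [← Nat.support_factorization]; exact Finsupp.mem_support_iff.mpr h.1
    have hpD := hdvd i hi j hj hij p (Int.natCast_dvd.mpr (Nat.dvd_of_factorization_pos h.1))
      (Int.natCast_dvd.mpr (Nat.dvd_of_factorization_pos h.2))
    exact (hpp.factorization_pos_of_dvd hD' (Int.natCast_dvd.mp hpD)).ne' hp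
  · exact (ite_two_le_sum_le s _).trans
      (Nat.add_le_add_right (Nat.le_mul_of_pos_right _ (Nat.pos_of_ne_zero hp)) _)

lemma sum_inv_sq_filter_le (N : ℕ) {y : ℝ} (hy : 0 < y) :
    ∑ s ∈ (Icc 1 N).filter (fun s : ℕ => y ≤ s), ((s : ℝ) ^ 2)⁻¹ ≤ 2 / y := by
  have hsub : (Icc 1 N).filter (fun s : ℕ => y ≤ s) ⊆ Ioo (⌈y⌉₊ - 1) (N + 1) := by
    intro s hs
    simp only [mem_filter, mem_Icc, mem_Ioo] at hs ⊢
    have := Nat.ceil_le.mpr hs.2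
    omega
  have hy' : y ≤ ((⌈y⌉₊ - 1 : ℕ) : ℝ) + 1 := by
    have h1 : 1 ≤ ⌈y⌉₊ := Nat.one_le_ceil_iff.mpr hy
    rw [Nat.cast_sub h1, Nat.cast_one, sub_add_cancel]
    exact Nat.le_ceil y
  calc ∑ s ∈ (Icc 1 N).filter (fun s : ℕ => y ≤ s), ((s : ℝ) ^ 2)⁻¹
      ≤ ∑ s ∈ Ioo (⌈y⌉₊ - 1) (N + 1), ((s : ℝ) ^ 2)⁻¹ :=
        sum_le_sum_of_subset_of_nonneg hsub fun _ _ _ => by positivity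
    _ ≤ 2 / (((⌈y⌉₊ - 1 : ℕ) : ℝ) + 1) := sum_Ioo_inv_sq_le _ _
    _ ≤ 2 / y := by gcongr

lemma inv_mul_sqrt_succ_le (n : ℕ) (hn : 1 ≤ n) :
    (((n + 1 : ℕ) : ℝ) * √((n + 1 : ℕ) : ℝ))⁻¹ ≤ 2 / √(n : ℝ) - 2 / √((n + 1 : ℕ) : ℝ) := by
  set u := √(n : ℝ)
  set v := √((n + 1 : ℕ) : ℝ)
  have hu : 1 ≤ u := Real.one_le_sqrt.mpr (by exact_mod_cast hn)
  have huv : u ≤ v := Real.sqrt_le_sqrt (by push_cast; linarith)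
  have hu2 : u ^ 2 = n := Real.sq_sqrt (by positivity)
  have hv2 : v ^ 2 = ((n + 1 : ℕ) : ℝ) := Real.sq_sqrt (by positivity)
  rw [← hv2, div_sub_div _ _ (by positivity) (by positivity), ← pow_succ, inv_eq_one_div,
    div_le_div_iff₀ (by positivity) (by positivity)]
  push_cast at hv2
  have hdiff : (v - u) * (v + u) = 1 := by nlinarith
  have key : u ≤ 2 * v ^ 2 * (v - u) := by
    nlinarith [mul_le_mul_of_nonneg_left huv (by linarith : (0:ℝ) ≤ v - u)]
  have := mul_le_mul_of_nonneg_left key (by linarith : (0:ℝ) ≤ v)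
  linear_combination this

lemma sum_Icc_inv_mul_sqrt_le (N : ℕ) : ∑ t ∈ Icc 1 N, ((t : ℝ) * √t)⁻¹ ≤ 3 := by
  suffices h : ∀ N : ℕ, 1 ≤ N → ∑ t ∈ Icc 1 N, ((t : ℝ) * √t)⁻¹ ≤ 3 - 2 / √(N : ℝ) by
    rcases Nat.eq_zero_or_pos N with rfl | hN
    · simp
    · linarith [h N hN, (by positivity : 0 ≤ 2 / √(N : ℝ))]
  refine Nat.le_induction (by norm_num) fun n hn ih => ?_
  rw [sum_Icc_succ_top (by omega)]
  linarith [inv_mul_sqrt_succ_le n hn]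

lemma sum_inv_sq_mul_cube_le (N : ℕ) {c : ℝ} (hc : 0 < c) :
    ∑ st ∈ (Icc 1 N ×ˢ Icc 1 N).filter (fun st : ℕ × ℕ => c ^ 2 ≤ (st.1 : ℝ) ^ 2 * st.2 ^ 3),
      ((st.1 : ℝ) ^ 2 * st.2 ^ 3)⁻¹ ≤ 6 / c := by
  rw [sum_filter, sum_product_right]
  have inner : ∀ t ∈ Icc 1 N, (∑ s ∈ Icc 1 N,
      if c ^ 2 ≤ (s : ℝ) ^ 2 * t ^ 3 then ((s : ℝ) ^ 2 * t ^ 3)⁻¹ else 0) ≤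
        2 / c * ((t : ℝ) * √t)⁻¹ := by
    intro t ht
    have ht0 : (0 : ℝ) < t := by exact_mod_cast (mem_Icc.mp ht).1
    have hw : (0 : ℝ) < t * √t := by positivity
    have hw2 : ((t : ℝ) * √t) ^ 2 = t ^ 3 := by
      rw [mul_pow, Real.sq_sqrt ht0.le]; ring
    have hiff : ∀ s : ℕ, c ^ 2 ≤ (s : ℝ) ^ 2 * t ^ 3 ↔ c / (t * √t) ≤ s := by
      intro s
      rw [div_le_iff₀ hw, ← hw2, ← mul_pow, pow_le_pow_iff_left₀ hc.le (by positivity) two_ne_zero]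
    calc (∑ s ∈ Icc 1 N,
          if c ^ 2 ≤ (s : ℝ) ^ 2 * t ^ 3 then ((s : ℝ) ^ 2 * t ^ 3)⁻¹ else 0)
        = ((t : ℝ) ^ 3)⁻¹ * ∑ s ∈ (Icc 1 N).filter (fun s : ℕ => c / (t * √t) ≤ s),
            ((s : ℝ) ^ 2)⁻¹ := by
          rw [sum_filter, mul_sum]
          refine sum_congr rfl fun s _ => ?_
          simp only [hiff, mul_inv, mul_ite, mul_zero, mul_comm]
      _ ≤ ((t : ℝ) ^ 3)⁻¹ * (2 / (c / (t * √t))) := by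
          gcongr
          exact sum_inv_sq_filter_le N (by positivity)
      _ = 2 / c * ((t : ℝ) * √t)⁻¹ := by
          rw [← hw2]; field_simp
  calc ∑ t ∈ Icc 1 N, ∑ s ∈ Icc 1 N,
        (if c ^ 2 ≤ (s : ℝ) ^ 2 * t ^ 3 then ((s : ℝ) ^ 2 * t ^ 3)⁻¹ else 0)
      ≤ ∑ t ∈ Icc 1 N, 2 / c * ((t : ℝ) * √t)⁻¹ := sum_le_sum inner
    _ ≤ 2 / c * 3 := by
        rw [← mul_sum]
        gcongr
        exact sum_Icc_inv_mul_sqrt_le N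
    _ = 6 / c := by ring

lemma IsPrim.isCoprime {x : Fin 2 → ℤ} (hx : IsPrim x) : IsCoprime (x 0) (x 1) := by
  rw [Int.isCoprime_iff_gcd_eq_one]
  simpa [IsPrim, Finset.gcd, Fin.univ_succ, ← Int.abs_eq_normalize, ← Int.coe_gcd,
    Int.gcd_eq_natAbs_gcd_natAbs, Int.natAbs_abs] using hx

lemma abs_le_supNorm {n : ℕ} (x : Fin n → ℤ) (k : Fin n) : |x k| ≤ (supNorm x : ℤ) := by
  rw [← Int.natCast_natAbs, Nat.cast_le]
  exact le_sup (f := fun i => (x i).natAbs) (mem_univ k)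

lemma abs_Lf_le (a b : Fin 4 → ℤ) (i : Fin 4) (x : Fin 2 → ℤ) :
    |Lf a b i x| ≤ (|a i| + |b i|) * supNorm x := by
  calc |Lf a b i x| ≤ |a i| * |x 0| + |b i| * |x 1| := by
        rw [Lf, ← abs_mul, ← abs_mul]; exact abs_add_le _ _
    _ ≤ (|a i| + |b i|) * supNorm x := by
        rw [add_mul]
        gcongr <;> exact abs_le_supNorm x _

lemma exists_abs_Lf_le_mul_supNorm (a b : Fin 4 → ℤ) :
    ∃ A : ℝ, 1 ≤ A ∧ ∀ i x, |(Lf a b i x : ℝ)| ≤ A * supNorm x := by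
  set A : ℝ := ∑ i, (|a i| + |b i| : ℝ)
  refine ⟨1 + A, by linarith [show 0 ≤ A by positivity], fun i x => ?_⟩
  have hi : (|a i| + |b i| : ℝ) ≤ A :=
    single_le_sum (f := fun i => (|a i| + |b i| : ℝ)) (fun _ _ => by positivity) (mem_univ i)
  calc |(Lf a b i x : ℝ)| ≤ (|a i| + |b i| : ℝ) * supNorm x := by exact_mod_cast abs_Lf_le a b i x
    _ ≤ (1 + A) * supNorm x := by gcongr ?_ * _; linarith

def detProd (a b : Fin 4 → ℤ) : ℤ :=
  ∏ ij ∈ (univ : Finset (Fin 4)).offDiag, (a ij.1 * b ij.2 - a ij.2 * b ij.1)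

section Forms

variable {a b : Fin 4 → ℤ} {i j : Fin 4}

lemma dvd_det_of_dvd_Lf {x : Fin 2 → ℤ} (hx : IsPrim x) {n : ℤ} (hi : n ∣ Lf a b i x)
    (hj : n ∣ Lf a b j x) : n ∣ a i * b j - a j * b i := by
  obtain ⟨u, v, huv⟩ := hx.isCoprime
  have : a i * b j - a j * b i =
      (u * b j - v * a j) * Lf a b i x + (v * a i - u * b i) * Lf a b j x := by
    rw [Lf, Lf]; linear_combination (a i * b j - a j * b i) * huv.symm
  rw [this]
  exact dvd_add (dvd_mul_of_dvd_right hi _) (dvd_mul_of_dvd_right hj _)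

lemma eq_of_Lf_eq_of_Lf_eq (hdet : a i * b j - a j * b i ≠ 0) {x y : Fin 2 → ℤ}
    (hi : Lf a b i x = Lf a b i y) (hj : Lf a b j x = Lf a b j y) : x = y := by
  rw [Lf, Lf] at hi hj
  have h0 : (a i * b j - a j * b i) * (x 0 - y 0) = 0 := by linear_combination b j * hi - b i * hj
  have h1 : (a i * b j - a j * b i) * (x 1 - y 1) = 0 := by linear_combination a i * hj - a j * hi
  funext k
  fin_cases k
  · exact sub_eq_zero.mp ((mul_eq_zero.mp h0).resolve_left hdet)
  · exact sub_eq_zero.mp ((mul_eq_zero.mp h1).resolve_left hdet)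

lemma card_erase_zero_Icc_product_Icc (M Q : ℤ) (hM : 0 ≤ M) (hQ : 0 ≤ Q) :
    ((#((Icc (-M) M).erase 0 ×ˢ Icc (-Q) Q) : ℕ) : ℤ) = 2 * M * (2 * Q + 1) := by
  rw [card_product, card_erase_of_mem (by simp; omega), Int.card_Icc, Int.card_Icc]
  push_cast [Nat.cast_sub (show 1 ≤ (M + 1 - -M).toNat by omega)]
  rw [Int.toNat_of_nonneg (by omega), Int.toNat_of_nonneg (by omega)]
  ring

lemma finite_and_ncard_le_of_dvd_Lf (hdet : a i * b j - a j * b i ≠ 0) {d : ℤ} (hd : 0 < d)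
    {P Q : ℝ} (hP : 0 ≤ P) (hQ : 1 ≤ Q) (X : Set (Fin 2 → ℤ))
    (hX : ∀ x ∈ X, d ∣ Lf a b i x ∧ Lf a b i x ≠ 0 ∧
      |(Lf a b i x : ℝ)| ≤ P ∧ |(Lf a b j x : ℝ)| ≤ Q) :
    X.Finite ∧ (X.ncard : ℝ) ≤ 6 * P * Q / d := by
  have hd' : (0 : ℝ) < d := by exact_mod_cast hd
  set M := ⌊P / d⌋
  set N := ⌊Q⌋
  set G := (Icc (-M) M).erase 0 ×ˢ Icc (-N) N
  set f : (Fin 2 → ℤ) → ℤ × ℤ := fun x => (Lf a b i x / d, Lf a b j x)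
  have hmaps : ∀ x ∈ X, f x ∈ (G : Set (ℤ × ℤ)) := by
    intro x hx
    obtain ⟨hdvd, hne, hPx, hQx⟩ := hX x hx
    obtain ⟨k, hk⟩ := hdvd
    have hk0 : k ≠ 0 := by rintro rfl; simp at hk; exact hne hk
    have hkM : |k| ≤ M := by
      rw [Int.le_floor, le_div_iff₀ hd']
      have : |(Lf a b i x : ℝ)| = d * |(k : ℝ)| := by
        rw [hk]; push_cast; rw [abs_mul, abs_of_pos hd']
      push_cast; linarith
    have hQN : |Lf a b j x| ≤ N := by
      rw [Int.le_floor]; push_cast; exact hQx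
    simp only [G, f, coe_product, Set.mem_prod, mem_coe, mem_erase, mem_Icc, hk,
      Int.mul_ediv_cancel_left _ hd.ne']
    exact ⟨⟨hk0, abs_le.mp hkM⟩, abs_le.mp hQN⟩
  have hinj : Set.InjOn f X := by
    intro x hx y hy hxy
    obtain ⟨⟨k, hk⟩, -⟩ := hX x hx
    obtain ⟨⟨l, hl⟩, -⟩ := hX y hy
    simp only [f, Prod.mk.injEq, hk, hl, Int.mul_ediv_cancel_left _ hd.ne'] at hxy
    exact eq_of_Lf_eq_of_Lf_eq hdet (by rw [hk, hl, hxy.1]) hxy.2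
  refine ⟨(G.finite_toSet.subset (Set.image_subset_iff.mpr hmaps)).of_finite_image hinj, ?_⟩
  have hM : (0 : ℝ) ≤ M := by exact_mod_cast Int.floor_nonneg.mpr (by positivity)
  have hN : (0 : ℝ) ≤ N := by exact_mod_cast Int.floor_nonneg.mpr (by linarith)
  have hcard : (X.ncard : ℝ) ≤ 2 * M * (2 * N + 1) := by
    have := Set.ncard_le_ncard_of_injOn f hmaps hinj G.finite_toSet
    rw [Set.ncard_coe_finset] at this
    have h := card_erase_zero_Icc_product_Icc M N (by exact_mod_cast hM) (by exact_mod_cast hN)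
    calc (X.ncard : ℝ) ≤ (#G : ℝ) := by exact_mod_cast this
      _ = 2 * M * (2 * N + 1) := by exact_mod_cast h
  calc (X.ncard : ℝ) ≤ 2 * M * (2 * N + 1) := hcard
    _ ≤ 2 * (P / d) * (3 * Q) := by
        gcongr
        · exact Int.floor_le _
        · linarith [Int.floor_le Q]
    _ = 6 * P * Q / d := by ring

lemma finite_and_ncard_le_of_dvd_Lf_of_abs_le (hprop : ∀ i j, i ≠ j → a i * b j - a j * b i ≠ 0)
    (i₁ i : Fin 4) {d : ℤ} (hd : 0 < d) {U V : ℝ} (hU : 1 ≤ U) (hV : 1 ≤ V)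
    (X : Set (Fin 2 → ℤ)) (hX : ∀ x ∈ X, (∀ k, |(Lf a b k x : ℝ)| ≤ U) ∧
      |(Lf a b i₁ x : ℝ)| ≤ V ∧ d ∣ Lf a b i x ∧ Lf a b i x ≠ 0) :
    X.Finite ∧ (X.ncard : ℝ) ≤ 6 * U * V / d := by
  by_cases h : i = i₁
  · subst h
    obtain ⟨j, hj⟩ := exists_ne i
    have := finite_and_ncard_le_of_dvd_Lf (hprop i j hj.symm) hd (by linarith) hU X
      fun x hx => ⟨(hX x hx).2.2.1, (hX x hx).2.2.2, (hX x hx).2.1, (hX x hx).1 j⟩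
    rwa [mul_right_comm] at this
  · exact finite_and_ncard_le_of_dvd_Lf (hprop i i₁ h) hd (by linarith) hV X
      fun x hx => ⟨(hX x hx).2.2.1, (hX x hx).2.2.2, (hX x hx).1 i, (hX x hx).2.1⟩

lemma detProd_ne_zero (hprop : ∀ i j, i ≠ j → a i * b j - a j * b i ≠ 0) : detProd a b ≠ 0 :=
  prod_ne_zero_iff.mpr fun ij hij => hprop ij.1 ij.2 (mem_offDiag.mp hij).2.2

lemma det_dvd_detProd {i j : Fin 4} (hij : i ≠ j) : a i * b j - a j * b i ∣ detProd a b := by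
  unfold detProd
  exact dvd_prod_of_mem (fun ij : Fin 4 × Fin 4 => a ij.1 * b ij.2 - a ij.2 * b ij.1)
    (a := (i, j)) (mem_offDiag.mpr ⟨mem_univ i, mem_univ j, hij⟩)

lemma exists_sq_lt_badPart_Lf (hprop : ∀ i j, i ≠ j → a i * b j - a j * b i ≠ 0)
    {x : Fin 2 → ℤ} (hx : IsPrim x) (h0 : ∏ i, Lf a b i x ≠ 0) {c : ℝ}
    (hbad : ((detProd a b).natAbs * c) ^ 8 < badPart (∏ i, Lf a b i x)) :
    ∃ i, c ^ 2 < badPart (Lf a b i x) := by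
  by_contra! hle
  set K := (detProd a b).natAbs
  have hK0 : K ≠ 0 := Int.natAbs_ne_zero.mpr (detProd_ne_zero hprop)
  have hK : (1 : ℝ) ≤ K := by exact_mod_cast Nat.one_le_iff_ne_zero.mpr hK0
  have hdvd := badPart_prod_dvd univ (fun i => Lf a b i x)
    (fun i _ hi => h0 (prod_eq_zero (mem_univ i) hi)) (detProd_ne_zero hprop)
    fun i _ j _ hij n hi hj => (dvd_det_of_dvd_Lf hx hi hj).trans (det_dvd_detProd hij)
  have hsplit : (badPart (∏ i, Lf a b i x) : ℝ) ≤ K ^ 4 * ∏ i, (badPart (Lf a b i x) : ℝ) := by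
    exact_mod_cast Nat.le_of_dvd (Nat.pos_of_ne_zero (mul_ne_zero (pow_ne_zero _ hK0)
      (prod_ne_zero_iff.mpr fun i _ => badPart_ne_zero _))) hdvd
  have hprod : ∏ i, (badPart (Lf a b i x) : ℝ) ≤ (c ^ 2) ^ 4 :=
    (prod_le_prod (fun i _ => Nat.cast_nonneg _) fun i _ => hle i).trans_eq (by simp)
  have := calc (badPart (∏ i, Lf a b i x) : ℝ)
      ≤ K ^ 4 * (c ^ 2) ^ 4 := hsplit.trans (by gcongr)
    _ ≤ K ^ 8 * (c ^ 2) ^ 4 := by gcongr; norm_num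
    _ = (K * c) ^ 8 := by ring
  linarith

lemma exists_sq_mul_cube_dvd_Lf (hprop : ∀ i j, i ≠ j → a i * b j - a j * b i ≠ 0)
    {x : Fin 2 → ℤ} (hx : IsPrim x) (h0 : ∏ i, Lf a b i x ≠ 0) {c : ℝ}
    (hbad : ((detProd a b).natAbs * c) ^ 8 < badPart (∏ i, Lf a b i x)) {N : ℕ}
    (hN : ∀ i, (Lf a b i x).natAbs ≤ N) :
    ∃ i, ∃ s t : ℕ, s ∈ Icc 1 N ∧ t ∈ Icc 1 N ∧ c ^ 2 ≤ (s : ℝ) ^ 2 * t ^ 3 ∧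
      s ^ 2 * t ^ 3 ∣ (Lf a b i x).natAbs := by
  obtain ⟨i, hi⟩ := exists_sq_lt_badPart_Lf hprop hx h0 hbad
  set n := (Lf a b i x).natAbs
  have hn : 0 < n := Int.natAbs_pos.mpr fun h => h0 (prod_eq_zero (mem_univ i) h)
  obtain ⟨s, t, hst⟩ := exists_sq_mul_cube_eq_prod_pow n.primeFactors (fun p => p)
    (fun p => if 2 ≤ n.factorization p then n.factorization p else 0)
    fun p _ => by split_ifs <;> omega
  rw [← badPart_eq_prod_pow] at hst
  have hdvd : s ^ 2 * t ^ 3 ∣ n := hst ▸ badPart_dvd_natAbs _ (Int.natAbs_pos.mp hn)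
  have hIcc : ∀ m, m ∣ s ^ 2 * t ^ 3 → m ∈ Icc 1 N := fun m hm => mem_Icc.mpr
    ⟨Nat.pos_of_dvd_of_pos (hm.trans hdvd) hn, (Nat.le_of_dvd hn (hm.trans hdvd)).trans (hN i)⟩
  refine ⟨i, s, t, hIcc s (Dvd.intro (s * t ^ 3) (by ring)),
    hIcc t (Dvd.intro_left (s ^ 2 * t ^ 2) (by ring)), ?_, hdvd⟩
  exact_mod_cast hst ▸ hi.le

end Forms

lemma ncard_le_sum_of_subset_biUnion {ι α : Type*} {X : Set α} {F : Finset ι} {Y : ι → Set α}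
    {w : ι → ℝ} (hX : X ⊆ ⋃ q ∈ F, Y q) (hY : ∀ q ∈ F, (Y q).Finite ∧ ((Y q).ncard : ℝ) ≤ w q) :
    (X.ncard : ℝ) ≤ ∑ q ∈ F, w q :=
  calc (X.ncard : ℝ) ≤ (⋃ q ∈ F, Y q).ncard := by
        exact_mod_cast Set.ncard_le_ncard hX (F.finite_toSet.biUnion fun q hq => (hY q hq).1)
    _ ≤ ∑ q ∈ F, ((Y q).ncard : ℝ) := by exact_mod_cast F.set_ncard_biUnion_le Y
    _ ≤ ∑ q ∈ F, w q := sum_le_sum fun q hq => (hY q hq).2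

theorem stmt16_general
    (a b : Fin 4 → ℤ)
    (hprop : ∀ i j, i ≠ j → a i * b j - a j * b i ≠ 0) :
    ∃ C : ℝ, 0 < C ∧ ∀ (δ : ℝ) (i₁ : Fin 4) (S R : ℝ), 0 ≤ δ → 1 ≤ S → 1 ≤ R →
      ((Set.ncard {x : Fin 2 → ℤ | IsPrim x ∧
          S ≤ (supNorm x : ℝ) ∧ (supNorm x : ℝ) < 2 * S ∧
          R ≤ |(Lf a b i₁ x : ℝ)| ∧ |(Lf a b i₁ x : ℝ)| < 2 * R ∧
          (∏ i, Lf a b i x) ≠ 0 ∧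
          (S * R) ^ δ < (badPart (∏ i, Lf a b i x) : ℝ)} : ℝ)) ≤
        C * (S * R) ^ ((1 : ℝ) - δ / 8) := by
  obtain ⟨A, hA, hL⟩ := exists_abs_Lf_le_mul_supNorm a b
  set K := (detProd a b).natAbs
  have hK : (0 : ℝ) < K := by exact_mod_cast Int.natAbs_pos.mpr (detProd_ne_zero hprop)
  refine ⟨576 * A * K, by positivity, fun δ i₁ S R _ hS hR => ?_⟩
  have hSR : 0 < S * R := by positivity
  set c := (S * R) ^ (δ / 8) / K
  have hc : 0 < c := by positivity
  have hKc : (S * R) ^ δ = (K * c) ^ 8 := by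
    rw [mul_div_cancel₀ _ hK.ne', ← Real.rpow_natCast, ← Real.rpow_mul hSR.le]
    norm_num
  set N := ⌊2 * A * S⌋₊
  set pairs := (Icc 1 N ×ˢ Icc 1 N).filter (fun st : ℕ × ℕ => c ^ 2 ≤ (st.1 : ℝ) ^ 2 * st.2 ^ 3)
  set Y : Fin 4 × ℕ × ℕ → Set (Fin 2 → ℤ) := fun q =>
    {x | (∀ k, |(Lf a b k x : ℝ)| ≤ 2 * A * S) ∧ |(Lf a b i₁ x : ℝ)| ≤ 2 * R ∧
      ((q.2.1 ^ 2 * q.2.2 ^ 3 : ℕ) : ℤ) ∣ Lf a b q.1 x ∧ Lf a b q.1 x ≠ 0}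
  have hY : ∀ q ∈ univ ×ˢ pairs, (Y q).Finite ∧
      ((Y q).ncard : ℝ) ≤ 24 * A * S * R * ((q.2.1 : ℝ) ^ 2 * q.2.2 ^ 3)⁻¹ := by
    rintro ⟨i, s, t⟩ hq
    simp only [pairs, mem_product, mem_filter, mem_Icc] at hq
    have := finite_and_ncard_le_of_dvd_Lf_of_abs_le hprop i₁ i
      (d := ((s ^ 2 * t ^ 3 : ℕ) : ℤ)) (by positivity [hq.2.1.1.1, hq.2.1.2.1])
      (by nlinarith) (by linarith) (Y (i, s, t)) fun x hx => hx
    push_cast at this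
    convert this using 2
    ring
  refine (ncard_le_sum_of_subset_biUnion ?_ hY).trans ?_
  · rintro x ⟨hx, -, hxS, -, hxR, h0, hbad⟩
    have hbox : ∀ k, |(Lf a b k x : ℝ)| ≤ 2 * A * S := fun k => (hL k x).trans (by nlinarith)
    obtain ⟨i, s, t, hs, ht, hst, hdvd⟩ := exists_sq_mul_cube_dvd_Lf hprop hx h0 (hKc ▸ hbad)
      (N := N) fun k => Nat.le_floor (by rw [Nat.cast_natAbs, Int.cast_abs]; exact hbox k)
    exact Set.mem_biUnion (x := (i, s, t))
      (mem_product.mpr ⟨mem_univ i, mem_filter.mpr ⟨mem_product.mpr ⟨hs, ht⟩, hst⟩⟩)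
      ⟨hbox, hxR.le, Int.natCast_dvd.mpr hdvd, fun h => h0 (prod_eq_zero (mem_univ i) h)⟩
  calc ∑ q ∈ univ ×ˢ pairs, 24 * A * S * R * ((q.2.1 : ℝ) ^ 2 * q.2.2 ^ 3)⁻¹
      = 4 * (24 * A * S * R) * ∑ st ∈ pairs, ((st.1 : ℝ) ^ 2 * st.2 ^ 3)⁻¹ := by
        simp only [sum_product, sum_const, card_univ, Fintype.card_fin, nsmul_eq_mul, ← mul_sum]
        ring
    _ ≤ 4 * (24 * A * S * R) * (6 / c) := by gcongr; exact sum_inv_sq_mul_cube_le N hc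
    _ = 576 * A * K * (S * R) ^ (1 - δ / 8) := by
        rw [Real.rpow_sub hSR, Real.rpow_one]
        simp only [c]
        field_simp
        ring

/-- Lemma 5.5 (lem:stain) of the paper. -/
theorem stmt16
    (a b : Fin 4 → ℤ)
    (hcop : ∀ i, IsCoprime (a i) (b i))
    (hprop : ∀ i j, i ≠ j → a i * b j - a j * b i ≠ 0) :
    ∃ C : ℝ, 0 < C ∧ ∀ (δ : ℝ) (i₁ : Fin 4) (S R : ℝ), 0 ≤ δ → 1 ≤ S → 1 ≤ R →
      ((Set.ncard {x : Fin 2 → ℤ | IsPrim x ∧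
          S ≤ (supNorm x : ℝ) ∧ (supNorm x : ℝ) < 2 * S ∧
          R ≤ |(Lf a b i₁ x : ℝ)| ∧ |(Lf a b i₁ x : ℝ)| < 2 * R ∧
          (∏ i, Lf a b i x) ≠ 0 ∧
          (S * R) ^ δ < (badPart (∏ i, Lf a b i x) : ℝ)} : ℝ)) ≤
        C * (S * R) ^ ((1 : ℝ) - δ / 8) :=
  stmt16_general a b hprop
end
end

section
/- For every prime p and every integer t ≥ 1, #{(x,y) ∈ (ℤ/p^tℤ)² × (ℤ/p^tℤ)⁴ : L₁(x)y₁² + L₂(x)y₂² + L₃(x)y₃² + L₄(x)y₄² ≡ 0 mod p^t} = p^{5t} + (p − 1)·Σ_{j=1}^{t} p^{5t − 3j − 1}·ϱ(p^j). -/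
open scoped BigOperators

noncomputable section

/-- `ϱ(q)`: the number of `y ∈ (ℤ/qℤ)⁴` with `Q₁(y) ≡ Q₂(y) ≡ 0 mod q`. -/
def rhoQ (a b : Fin 4 → ℤ) (q : ℕ) : ℕ :=
  Set.ncard {y : Fin 4 → ZMod q |
    (∑ i, (a i : ZMod q) * y i ^ 2 = 0) ∧ (∑ i, (b i : ZMod q) * y i ^ 2 = 0)}

/-!
For fixed `y`, the congruence is linear in `x`: `c x₁ + d x₂ = 0` with `c = Σ aᵢyᵢ²`, `d = Σ bᵢyᵢ²`.
Over `ℤ/n`, the image of `x ↦ c x₁ + d x₂` is the principal ideal `(c, d) = (g)`, and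
`|(g)| · |ann g| = n`, so this equation has `n · #{w : c w = d w = 0}` solutions. Sorting such `w`
by their additive order `k ∣ n` turns the last count into `Σ φ(k)` over the `k ∣ n` dividing both
`c` and `d`. Summing over `y`, the `y` with `k ∣ c, d` are the `(n/k)⁴` lifts of each of the `ϱ(k)`
solutions mod `k`. For `n = pᵗ` the divisor `k = 1` gives `p^{5t}`, and `k = pʲ` gives
`pᵗ · pʲ⁻¹(p - 1) · p^{4(t-j)} · ϱ(pʲ)`.
-/

open Finset

theorem AddMonoidHom.card_ker_mul_card_range {A B : Type*} [AddGroup A] [AddGroup B]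
    (f : A →+ B) : Nat.card f.ker * Nat.card f.range = Nat.card A := by
  rw [← f.ker.card_mul_index, AddSubgroup.index_ker]

theorem AddMonoidHom.card_preimage_of_surjective {A B : Type*} [AddGroup A] [AddGroup B]
    (f : A →+ B) (hf : Function.Surjective f) (s : Set B) :
    Nat.card (f ⁻¹' s) = Nat.card f.ker * Nat.card s := by
  let e := QuotientAddGroup.quotientKerEquivOfSurjective f hf
  have hpre : f ⁻¹' s = QuotientAddGroup.mk ⁻¹' (e ⁻¹' s) := rfl
  rw [hpre, Nat.card_congr (QuotientAddGroup.preimageMkEquivAddSubgroupProdSet _ _),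
    Nat.card_prod, Nat.card_preimage_of_injective e.injective (by simp [e.surjective.range_eq])]

section PrincipalIdealRing

variable {R : Type*} [CommRing R]

theorem card_annihilator_mul_card_span_singleton (g : R) :
    Nat.card {w : R // g * w = 0} * Nat.card (Ideal.span {g}) = Nat.card R := by
  rw [← (AddMonoidHom.mulLeft g).card_ker_mul_card_range]
  congr 1
  refine Nat.card_congr (Equiv.setCongr ?_)
  ext x
  simp [Ideal.mem_span_singleton, dvd_iff_exists_eq_mul_left, eq_comm, mul_comm]

theorem card_mul_add_mul_eq_zero [Finite R] [IsPrincipalIdealRing R] (c d : R) :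
    Nat.card {x : Fin 2 → R // c * x 0 + d * x 1 = 0} =
      Nat.card R * Nat.card {w : R // c * w = 0 ∧ d * w = 0} := by
  let L : (Fin 2 → R) →+ R :=
    { toFun := fun x => c * x 0 + d * x 1
      map_zero' := by simp
      map_add' := fun x y => by simp only [Pi.add_apply]; ring }
  obtain ⟨g, hg⟩ := (IsPrincipalIdealRing.principal (Ideal.span {c, d})).principal
  replace hg : Ideal.span {c, d} = Ideal.span {g} := hg
  have hc : ∃ u, u * g = c := Ideal.mem_span_singleton'.mp (hg ▸ Ideal.subset_span (by simp))
  have hd : ∃ u, u * g = d := Ideal.mem_span_singleton'.mp (hg ▸ Ideal.subset_span (by simp))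
  have hgcd : ∃ u v, u * c + v * d = g :=
    Ideal.mem_span_pair.mp (hg ▸ Ideal.mem_span_singleton_self g)
  have hann : Nat.card {w : R // c * w = 0 ∧ d * w = 0} = Nat.card {w : R // g * w = 0} := by
    refine Nat.card_congr <| Equiv.subtypeEquivRight fun w =>
      ⟨fun ⟨h1, h2⟩ => ?_, fun h => ⟨?_, ?_⟩⟩
    · obtain ⟨u, v, rfl⟩ := hgcd
      linear_combination u * h1 + v * h2
    · obtain ⟨u, rfl⟩ := hc
      linear_combination u * h
    · obtain ⟨u, rfl⟩ := hd
      linear_combination u * h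
  have hrange : Nat.card L.range = Nat.card (Ideal.span {g}) := by
    refine Nat.card_congr (Equiv.setCongr ?_)
    ext x
    simp only [AddMonoidHom.coe_range, Set.mem_range, SetLike.mem_coe, ← hg, Ideal.mem_span_pair]
    exact ⟨fun ⟨y, hy⟩ => ⟨y 0, y 1, by rw [← hy]; simp [L, mul_comm]⟩,
      fun ⟨u, v, huv⟩ => ⟨![u, v], by rw [← huv]; simp [L, mul_comm]⟩⟩
  have hker : Nat.card L.ker = Nat.card {x : Fin 2 → R // c * x 0 + d * x 1 = 0} :=
    Nat.card_congr (Equiv.subtypeEquivRight fun x => by simp [L])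
  have hL := L.card_ker_mul_card_range
  rw [hker, hrange, Nat.card_fun, Nat.card_fin] at hL
  rw [hann]
  refine Nat.eq_of_mul_eq_mul_right (Nat.card_pos (α := Ideal.span {g})) ?_
  rw [hL, mul_assoc, card_annihilator_mul_card_span_singleton, sq]

end PrincipalIdealRing

instance ZMod.isPrincipalIdealRing (n : ℕ) : IsPrincipalIdealRing (ZMod n) :=
  IsPrincipalIdealRing.of_surjective (Int.castRingHom (ZMod n)) ZMod.intCast_surjective

theorem ZMod.mul_eq_zero_iff_addOrderOf_dvd {n : ℕ} [NeZero n] (c w : ZMod n) :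
    c * w = 0 ↔ addOrderOf w ∣ c.val := by
  rw [addOrderOf_dvd_iff_nsmul_eq_zero, nsmul_eq_mul, ZMod.natCast_zmod_val]

theorem ZMod.card_annihilator_pair_eq_sum_totient (n : ℕ) [NeZero n] (c d : ZMod n) :
    Nat.card {w : ZMod n // c * w = 0 ∧ d * w = 0} =
      ∑ k ∈ n.divisors, if k ∣ c.val ∧ k ∣ d.val then k.totient else 0 := by
  simp_rw [ZMod.mul_eq_zero_iff_addOrderOf_dvd, Nat.card_eq_fintype_card, Fintype.card_subtype]
  rw [card_eq_sum_card_fiberwise (f := addOrderOf) (t := n.divisors) fun w _ => by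
    simpa [Nat.mem_divisors, NeZero.ne n] using addOrderOf_dvd_natCard w]
  refine sum_congr rfl fun k hk => ?_
  rw [filter_filter]
  split_ifs with hkcd
  · rw [← IsAddCyclic.card_addOrderOf_eq_totient (α := ZMod n)
      (by simpa using Nat.dvd_of_mem_divisors hk)]
    congr 1
    ext w
    simp only [mem_filter, mem_univ, true_and]
    exact ⟨And.right, by rintro rfl; exact ⟨hkcd, rfl⟩⟩
  · rw [card_eq_zero, filter_eq_empty_iff]
    rintro w - ⟨hw, rfl⟩
    exact hkcd hw

/-- `Q₁ = diagForm a` and `Q₂ = -diagForm b` in the paper's notation. -/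
def diagForm {ι R : Type*} [Fintype ι] [CommRing R] (a : ι → ℤ) (y : ι → R) : R :=
  ∑ i, (a i : R) * y i ^ 2

theorem map_diagForm {ι R S : Type*} [Fintype ι] [CommRing R] [CommRing S] (f : R →+* S)
    (a : ι → ℤ) (y : ι → R) : f (diagForm a y) = diagForm a (f ∘ y) := by
  simp [diagForm, map_sum]

theorem card_dvd_val_diagForm (a b : Fin 4 → ℤ) {n k : ℕ} [NeZero n] (hk : k ∣ n) :
    #{y : Fin 4 → ZMod n | k ∣ (diagForm a y).val ∧ k ∣ (diagForm b y).val} =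
      rhoQ a b k * (n / k) ^ 4 := by
  have : NeZero k := ⟨fun h => NeZero.ne n (Nat.eq_zero_of_zero_dvd (h ▸ hk))⟩
  let π := ZMod.castHom hk (ZMod k)
  let f := π.toAddMonoidHom.compLeft (Fin 4)
  have hf : Function.Surjective f := fun z => by
    choose y hy using fun i => ZMod.ringHom_surjective π (z i)
    exact ⟨y, funext hy⟩
  have hπ : ∀ x : ZMod n, k ∣ x.val ↔ π x = 0 := fun x => by
    rw [ZMod.castHom_apply, ZMod.cast_eq_val, ZMod.natCast_eq_zero_iff]
  have hpre : {y : Fin 4 → ZMod n | k ∣ (diagForm a y).val ∧ k ∣ (diagForm b y).val} =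
      f ⁻¹' {z | diagForm a z = 0 ∧ diagForm b z = 0} := by
    ext y
    simp only [Set.mem_ofPred_eq, Set.mem_preimage, hπ, map_diagForm]
    rfl
  have hker : Nat.card f.ker * k ^ 4 = n ^ 4 := by
    simpa [Nat.card_eq_fintype_card] using (f.card_preimage_of_surjective hf Set.univ).symm
  rw [← Set.ncard_coe_finset, coe_filter_univ, ← Nat.card_coe_set_eq, hpre,
    f.card_preimage_of_surjective hf, mul_comm, Nat.div_pow hk, ← hker,
    Nat.mul_div_cancel _ (pow_pos (Nat.pos_of_neZero k) 4)]
  rfl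

theorem ncard_pencil_eq_zero_eq_sum_divisors (a b : Fin 4 → ℤ) (n : ℕ) [NeZero n] :
    Set.ncard {xy : (Fin 2 → ZMod n) × (Fin 4 → ZMod n) |
        ∑ i, ((a i : ZMod n) * xy.1 0 + (b i : ZMod n) * xy.1 1) * xy.2 i ^ 2 = 0} =
      ∑ k ∈ n.divisors, n * k.totient * (n / k) ^ 4 * rhoQ a b k := by
  have hform : ∀ (x : Fin 2 → ZMod n) (y : Fin 4 → ZMod n),
      ∑ i, ((a i : ZMod n) * x 0 + (b i : ZMod n) * x 1) * y i ^ 2 =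
        diagForm a y * x 0 + diagForm b y * x 1 := fun x y => by
    simp only [diagForm, sum_mul, ← sum_add_distrib]
    exact sum_congr rfl fun i _ => by ring
  classical
  calc _ = ∑ y : Fin 4 → ZMod n,
        Nat.card {x : Fin 2 → ZMod n // diagForm a y * x 0 + diagForm b y * x 1 = 0} := by
        rw [Set.ncard_eq_toFinset_card', Set.toFinset_ofPred, card_filter,
          Fintype.sum_prod_type_right]
        simp only [hform, Nat.card_eq_fintype_card, Fintype.card_subtype, card_filter]
    _ = ∑ y : Fin 4 → ZMod n, n * ∑ k ∈ n.divisors,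
          if k ∣ (diagForm a y).val ∧ k ∣ (diagForm b y).val then k.totient else 0 := by
        simp only [card_mul_add_mul_eq_zero, ZMod.card_annihilator_pair_eq_sum_totient,
          Nat.card_zmod]
    _ = ∑ k ∈ n.divisors, n * k.totient *
          #{y : Fin 4 → ZMod n | k ∣ (diagForm a y).val ∧ k ∣ (diagForm b y).val} := by
        rw [← mul_sum, sum_comm, mul_sum]
        refine sum_congr rfl fun k _ => ?_
        rw [← sum_filter, sum_const, smul_eq_mul]
        ring
    _ = _ := sum_congr rfl fun k hk => by
        rw [card_dvd_val_diagForm a b (Nat.dvd_of_mem_divisors hk)]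
        ring

theorem rhoQ_one (a b : Fin 4 → ℤ) : rhoQ a b 1 = 1 := by
  simp [rhoQ, Subsingleton.elim _ (0 : ZMod 1)]

theorem stmt19_general
    (a b : Fin 4 → ℤ)
    (p : ℕ) (hp : p.Prime) (t : ℕ) :
    Set.ncard {xy : (Fin 2 → ZMod (p ^ t)) × (Fin 4 → ZMod (p ^ t)) |
        ∑ i, ((a i : ZMod (p ^ t)) * xy.1 0 + (b i : ZMod (p ^ t)) * xy.1 1) * xy.2 i ^ 2
          = 0} =
      p ^ (5 * t) + (p - 1) * ∑ j ∈ Finset.Icc 1 t, p ^ (5 * t - 3 * j - 1) * rhoQ a b (p ^ j) := by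
  have : NeZero (p ^ t) := ⟨pow_ne_zero t hp.ne_zero⟩
  rw [ncard_pencil_eq_zero_eq_sum_divisors, Nat.sum_divisors_prime_pow hp, range_eq_Ico,
    sum_eq_sum_Ico_succ_bot (Nat.zero_lt_succ t), zero_add, Nat.succ_eq_add_one,
    Ico_add_one_right_eq_Icc, mul_sum]
  congr 1
  · rw [pow_zero, Nat.div_one, rhoQ_one, Nat.totient_one]
    ring
  · refine sum_congr rfl fun j hj => ?_
    obtain ⟨hj1, hjt⟩ := mem_Icc.mp hj
    have hexp : t + (j - 1) + (t - j) * 4 = 5 * t - 3 * j - 1 := by omega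
    rw [Nat.totient_prime_pow hp hj1, Nat.pow_div hjt hp.pos, ← pow_mul, ← hexp, pow_add, pow_add]
    ring

/-- Lemma 8.2 (lem:npt) of the paper, as an exact identity. -/
theorem stmt19
    (a b : Fin 4 → ℤ)
    (hcop : ∀ i, IsCoprime (a i) (b i))
    (hprop : ∀ i j, i ≠ j → a i * b j - a j * b i ≠ 0)
    (p : ℕ) (hp : p.Prime) (t : ℕ) (ht : 1 ≤ t) :
    Set.ncard {xy : (Fin 2 → ZMod (p ^ t)) × (Fin 4 → ZMod (p ^ t)) |
        ∑ i, ((a i : ZMod (p ^ t)) * xy.1 0 + (b i : ZMod (p ^ t)) * xy.1 1) * xy.2 i ^ 2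
          = 0} =
      p ^ (5 * t) + (p - 1) * ∑ j ∈ Finset.Icc 1 t, p ^ (5 * t - 3 * j - 1) * rhoQ a b (p ^ j) :=
  stmt19_general a b p hp t
end
end
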